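/- arXiv:2210.07086 — 2 statements merged into one kernel-verified Lean document; each statement's English description precedes it below -/
import Mathlib

section
/- Under the stated hypotheses, fix x > 0 with I + R_x invertible and set F = (I + R_x)⁻¹. Then for all bounded linear operators P, Q : H → H, the bracket is multiplicative with respect to the star product: C(exp(−xA)·F·P·(A·F + F·A − 2·F·A·F)·Q·F·exp(−xA)·b) = C(exp(−xA)·F·P·F·exp(−xA)·b) · C(exp(−xA)·F·Q·F·exp(−xA)·b). -/
/-!
`R_x` solves the Lyapunov equation `A R_x + R_x A = e^{-xA} B C e^{-xA}`: the integrand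
`g(t) = e^{-tA} B C e^{-tA}` satisfies `g' = -(A g + g A)` and decays exponentially, so integrating
over `(x, ∞)` gives `A R_x + R_x A = g(x)`. Writing `I + R_x = F⁻¹`, the star kernel
`A F + F A - 2 F A F` equals `F (A R_x + R_x A) F = F e^{-xA} B C e^{-xA} F`, a rank-one operator,
and the bracket of `P ∗ Q` factors through `C(·)` and `b`.
-/

open MeasureTheory

/-- The semigroup `exp(-tA)` generated by a bounded operator `A`. -/
noncomputable def expA {H : Type*} [NormedAddCommGroup H] [InnerProductSpace ℂ H]
    [CompleteSpace H] (A : H →L[ℂ] H) (t : ℝ) : H →L[ℂ] H :=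
  NormedSpace.exp ((-(t : ℂ)) • A)

/-- `R_x = ∫_x^∞ exp(-tA)·BC·exp(-tA) dt` as a Bochner integral. -/
noncomputable def Rop {H : Type*} [NormedAddCommGroup H] [InnerProductSpace ℂ H]
    [CompleteSpace H] (A : H →L[ℂ] H) (BC : H →L[ℂ] H) (x : ℝ) : H →L[ℂ] H :=
  ∫ t in Set.Ioi x, expA A t * BC * expA A t

open Set Filter Topology Asymptotics

theorem mul_integral_Ioi_add_integral_Ioi_mul_eq {𝔸 : Type*} [NormedRing 𝔸] [NormedAlgebra ℝ 𝔸]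
    [CompleteSpace 𝔸] {A : 𝔸} {g : ℝ → 𝔸} {c : ℝ} (hc : 0 < c)
    (hg : ∀ t, HasDerivAt g (-(A * g t + g t * A)) t)
    (hdecay : g =O[atTop] fun t => Real.exp (-c * t)) (x : ℝ) :
    A * (∫ t in Ioi x, g t) + (∫ t in Ioi x, g t) * A = g x := by
  have hcont : Continuous g := continuous_iff_continuousAt.2 fun t => (hg t).continuousAt
  have hint : IntegrableOn g (Ioi x) :=
    (integrableOn_Ici_iff_integrableOn_Ioi).mp <|
      (hcont.continuousOn.locallyIntegrableOn measurableSet_Ici).integrableOn_of_isBigO_atTop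
        hdecay ⟨Ioi c, Ioi_mem_atTop c, exp_neg_integrableOn_Ioi c hc⟩
  have hlim : Tendsto g atTop (𝓝 0) :=
    hdecay.trans_tendsto <| Real.tendsto_exp_atBot.comp <|
      tendsto_id.const_mul_atTop_of_neg (neg_neg_of_pos hc)
  have hftc := integral_Ioi_of_hasDerivAt_of_tendsto' (fun t _ => hg t)
    ((hint.const_mul A).add (hint.mul_const A)).neg hlim
  rwa [integral_neg, integral_add (hint.const_mul A) (hint.mul_const A),
    integral_const_mul_of_integrable hint, integral_mul_const_of_integrable hint, zero_sub,
    neg_inj] at hftc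

theorem mul_add_mul_sub_two_mul_mul_eq {R : Type*} [Ring R] {A S F : R}
    (hl : F * (1 + S) = 1) (hr : (1 + S) * F = 1) :
    A * F + F * A - 2 * (F * A * F) = F * (A * S + S * A) * F :=
  calc A * F + F * A - 2 * (F * A * F)
      = (F * (1 + S)) * A * F + F * A * ((1 + S) * F) - 2 * (F * A * F) := by
        rw [hl, hr, one_mul, mul_one]
    _ = F * (A * S + S * A) * F := by noncomm_ring

theorem apply_mul_smulRight_mul_apply {𝕜 E : Type*} [NormedField 𝕜] [NormedAddCommGroup E]
    [NormedSpace 𝕜 E] (C : E →L[𝕜] 𝕜) (b : E) (X Y : E →L[𝕜] E) :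
    C ((X * C.smulRight b * Y) b) = C (X b) * C (Y b) := by
  simp only [mul_apply_eq_comp, ContinuousLinearMap.smulRight_apply, map_smul,
    smul_eq_mul, mul_comm]

section expA

variable {H : Type*} [NormedAddCommGroup H] [InnerProductSpace ℂ H] [CompleteSpace H]
  (A : H →L[ℂ] H)

theorem expA_eq_exp_smul_neg (t : ℝ) : expA A t = NormedSpace.exp (t • -A) := by
  rw [expA, smul_neg, ← neg_smul]
  norm_cast

theorem commute_expA (t : ℝ) : Commute A (expA A t) := by
  rw [expA_eq_exp_smul_neg]
  exact ((Commute.refl A).neg_right.smul_right t).exp_right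

theorem hasDerivAt_expA (t : ℝ) : HasDerivAt (expA A) (-(A * expA A t)) t := by
  have h := hasDerivAt_exp_smul_const' (𝕂 := ℝ) (-A) t
  simpa only [← expA_eq_exp_smul_neg, neg_mul] using h

theorem hasDerivAt_expA_mul_mul_expA (X : H →L[ℂ] H) (t : ℝ) :
    HasDerivAt (fun s => expA A s * X * expA A s)
      (-(A * (expA A t * X * expA A t) + expA A t * X * expA A t * A)) t := by
  refine (((hasDerivAt_expA A t).mul_const X).mul (hasDerivAt_expA A t)).congr_deriv ?_
  nth_rw 2 [(commute_expA A t).eq]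
  noncomm_ring

variable {A}

theorem isBigO_expA {M ε : ℝ} (hdecay : ∀ t : ℝ, 0 ≤ t → ‖expA A t‖ ≤ M * Real.exp (-ε * t)) :
    expA A =O[atTop] fun t => Real.exp (-ε * t) :=
  IsBigO.of_bound M <| (eventually_ge_atTop 0).mono fun t ht => by
    simpa only [Real.norm_eq_abs, abs_of_pos (Real.exp_pos _)] using hdecay t ht

theorem mul_Rop_add_Rop_mul {M ε : ℝ} (hε : 0 < ε)
    (hdecay : ∀ t : ℝ, 0 ≤ t → ‖expA A t‖ ≤ M * Real.exp (-ε * t)) (X : H →L[ℂ] H) (x : ℝ) :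
    A * Rop A X x + Rop A X x * A = expA A x * X * expA A x := by
  have hg : (fun t => expA A t * X * expA A t) =O[atTop] fun t => Real.exp (-(2 * ε) * t) := by
    refine (((isBigO_expA hdecay).mul (isBigO_const_one ℝ X atTop)).mul
      (isBigO_expA hdecay)).congr_right fun t => ?_
    rw [mul_one, ← Real.exp_add]
    ring_nf
  exact mul_integral_Ioi_add_integral_Ioi_mul_eq (by positivity)
    (hasDerivAt_expA_mul_mul_expA A X) hg x

end expA

theorem bracket_star_product_multiplicative_general
    {H : Type*} [NormedAddCommGroup H] [InnerProductSpace ℂ H] [CompleteSpace H]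
    (A : H →L[ℂ] H) (b : H) (C : H →L[ℂ] ℂ)
    (M ε : ℝ) (hε : 0 < ε)
    (hdecay : ∀ t : ℝ, 0 ≤ t → ‖expA A t‖ ≤ M * Real.exp (-ε * t))
    (x : ℝ)
    (hinv : IsUnit (1 + Rop A (C.smulRight b) x))
    (F : H →L[ℂ] H) (hF : F = Ring.inverse (1 + Rop A (C.smulRight b) x)) :
    ∀ P Q : H →L[ℂ] H,
      C ((expA A x * F * P * (A * F + F * A - (2 : ℂ) • (F * A * F)) * Q * F * expA A x) b)
        = C ((expA A x * F * P * F * expA A x) b)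
            * C ((expA A x * F * Q * F * expA A x) b) := by
  intro P Q
  have hl : F * (1 + Rop A (C.smulRight b) x) = 1 := hF ▸ Ring.inverse_mul_cancel _ hinv
  have hr : (1 + Rop A (C.smulRight b) x) * F = 1 := hF ▸ Ring.mul_inverse_cancel _ hinv
  have hkernel : A * F + F * A - (2 : ℂ) • (F * A * F)
      = F * (expA A x * C.smulRight b * expA A x) * F := by
    rw [two_smul, ← two_mul, mul_add_mul_sub_two_mul_mul_eq hl hr, mul_Rop_add_Rop_mul hε hdecay]
  have hrankOne := apply_mul_smulRight_mul_apply C b (expA A x * F * P * F * expA A x)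
    (expA A x * F * Q * F * expA A x)
  rw [hkernel]
  simpa only [mul_assoc] using hrankOne

/-- With the rank-one operator `BC : v ↦ C(v)·b`, `R_x` as above, `F = (I + R_x)⁻¹`, the
bracket `⌊P⌋ = C(exp(−xA)·F·P·F·exp(−xA)·b)` is multiplicative with respect to the star
product `P∗Q = P·(A·F + F·A − 2·F·A·F)·Q`, i.e. `⌊P∗Q⌋ = ⌊P⌋·⌊Q⌋`. -/
theorem bracket_star_product_multiplicative
    {H : Type*} [NormedAddCommGroup H] [InnerProductSpace ℂ H] [CompleteSpace H]
    (A : H →L[ℂ] H) (b : H) (C : H →L[ℂ] ℂ)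
    (M ε : ℝ) (hM : 0 < M) (hε : 0 < ε)
    (hdecay : ∀ t : ℝ, 0 ≤ t → ‖expA A t‖ ≤ M * Real.exp (-ε * t))
    (x : ℝ) (hx : 0 < x)
    (hinv : IsUnit (1 + Rop A (C.smulRight b) x))
    (F : H →L[ℂ] H) (hF : F = Ring.inverse (1 + Rop A (C.smulRight b) x)) :
    ∀ P Q : H →L[ℂ] H,
      C ((expA A x * F * P * (A * F + F * A - (2 : ℂ) • (F * A * F)) * Q * F * expA A x) b)
        = C ((expA A x * F * P * F * expA A x) b)
            * C ((expA A x * F * Q * F * expA A x) b) :=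
  bracket_star_product_multiplicative_general A b C M ε hε hdecay x hinv F hF
end

section
/- Under the stated hypotheses, suppose I + R_x is invertible for all x > 0, and define Φ(t) = C(exp(−tA)·b) and T(x,y) = −C(exp(−xA)·(I + R_x)⁻¹·exp(−yA)·b). Then T solves the Gelfand–Levitan equation: for all 0 < x < y, Φ(x+y) + T(x,y) + ∫_x^∞ T(x,z)·Φ(z+y) dz = 0. -/
/-!
Write `E t = exp(-tA)`, `B = C.smulRight b` and `G = (1 + R_x)⁻¹`. Since `B w = C(w) • b`, the
integrand `T(x,z) Φ(z+y)` is `-C(E x G (E z B E z) (E y b))`, so the exponential decay makes the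
integral equal to `-C(E x G R_x E y b)`. The equation then collapses to
`C(E x (1 - G (1 + R_x)) E y b) = 0`, which is the defining property of `G`.
-/

open MeasureTheory

section

variable {H : Type*} [NormedAddCommGroup H] [InnerProductSpace ℂ H] [CompleteSpace H]
  (A : H →L[ℂ] H)

lemma expA_add (s t : ℝ) : expA A (s + t) = expA A s * expA A t := by
  let : NormedAlgebra ℚ (H →L[ℂ] H) := .restrictScalars ℚ ℂ _
  have h : (-((s + t : ℝ) : ℂ)) • A = (-(s : ℂ)) • A + (-(t : ℂ)) • A := by
    rw [← add_smul]; push_cast; ring_nf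
  rw [expA, h]
  exact NormedSpace.exp_add_of_commute (((Commute.refl A).smul_left _).smul_right _)

lemma continuous_expA : Continuous (expA A) := by
  let : NormedAlgebra ℚ (H →L[ℂ] H) := .restrictScalars ℚ ℂ _
  exact NormedSpace.exp_continuous.comp ((Complex.continuous_ofReal.neg).smul continuous_const)

lemma integrableOn_expA_mul_mul_expA (B : H →L[ℂ] H) {M ε : ℝ} (hε : 0 < ε)
    (hdecay : ∀ t : ℝ, 0 ≤ t → ‖expA A t‖ ≤ M * Real.exp (-ε * t)) {x : ℝ} (hx : 0 ≤ x) :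
    IntegrableOn (fun z => expA A z * B * expA A z) (Set.Ioi x) := by
  have : SecondCountableTopologyEither ℝ (H →L[ℂ] H) :=
    secondCountableTopologyEither_of_left ℝ _
  have hcont : Continuous (fun z => expA A z * B * expA A z) :=
    ((continuous_expA A).mul continuous_const).mul (continuous_expA A)
  refine Integrable.mono' ((exp_neg_integrableOn_Ioi x (by positivity : 0 < 2 * ε)).const_mul
    (M * M * ‖B‖)) hcont.aestronglyMeasurable ?_
  filter_upwards [ae_restrict_mem measurableSet_Ioi] with z hz
  have hbound := hdecay z (hx.trans (le_of_lt hz))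
  have hM : 0 ≤ M * Real.exp (-ε * z) := (norm_nonneg _).trans hbound
  calc ‖expA A z * B * expA A z‖ ≤ ‖expA A z‖ * ‖B‖ * ‖expA A z‖ :=
        (norm_mul_le _ _).trans (mul_le_mul_of_nonneg_right (norm_mul_le _ _) (norm_nonneg _))
    _ ≤ (M * Real.exp (-ε * z)) * ‖B‖ * (M * Real.exp (-ε * z)) := by gcongr
    _ = M * M * ‖B‖ * Real.exp (-(2 * ε) * z) := by
        rw [show -(2 * ε) * z = -ε * z + -ε * z by ring, Real.exp_add]; ring

lemma integral_apply_expA_mul_apply_expA_eq_Rop (b : H) (C L : H →L[ℂ] ℂ) {x : ℝ}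
    (hint : IntegrableOn (fun z => expA A z * C.smulRight b * expA A z) (Set.Ioi x)) (v : H) :
    ∫ z in Set.Ioi x, L (expA A z b) * C (expA A z v) = L (Rop A (C.smulRight b) x v) := by
  have hsandwich : ∀ z, L (expA A z b) * C (expA A z v) =
      L ((expA A z * C.smulRight b * expA A z) v) := by
    intro z
    simp only [mul_apply_eq_comp, ContinuousLinearMap.smulRight_apply, map_smul,
      smul_eq_mul, mul_comm]
  have hint_v : IntegrableOn (fun z => (expA A z * C.smulRight b * expA A z) v) (Set.Ioi x) :=
    (ContinuousLinearMap.apply ℂ H v).integrable_comp hint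
  simp_rw [hsandwich]
  rw [L.integral_comp_comm hint_v, Rop, ContinuousLinearMap.integral_apply hint]

end

theorem gelfand_levitan_general
    {H : Type*} [NormedAddCommGroup H] [InnerProductSpace ℂ H] [CompleteSpace H]
    (A : H →L[ℂ] H) (b : H) (C : H →L[ℂ] ℂ)
    (M ε : ℝ) (hε : 0 < ε)
    (hdecay : ∀ t : ℝ, 0 ≤ t → ‖expA A t‖ ≤ M * Real.exp (-ε * t))
    (hinv : ∀ x : ℝ, 0 < x → IsUnit (1 + Rop A (C.smulRight b) x))
    (Φ : ℝ → ℂ) (hΦ : ∀ t : ℝ, Φ t = C (expA A t b))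
    (T : ℝ → ℝ → ℂ)
    (hT : ∀ x y : ℝ, T x y =
      -(C ((expA A x * Ring.inverse (1 + Rop A (C.smulRight b) x) * expA A y) b))) :
    ∀ x y : ℝ, 0 < x → x < y →
      Φ (x + y) + T x y + ∫ z in Set.Ioi x, T x z * Φ (z + y) = 0 := by
  intro x y hx _
  set R := Rop A (C.smulRight b) x
  set G := Ring.inverse (1 + R)
  set L := C.comp (expA A x * G)
  have hintegral : ∫ z in Set.Ioi x, T x z * Φ (z + y) = -L (R (expA A y b)) := by
    have hpt : ∀ z, T x z * Φ (z + y) = -(L (expA A z b) * C (expA A z (expA A y b))) := by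
      intro z
      rw [hT, hΦ, expA_add]
      simp only [L, G, R, ContinuousLinearMap.comp_apply, mul_apply_eq_comp, neg_mul]
    simp_rw [hpt]
    rw [integral_neg, integral_apply_expA_mul_apply_expA_eq_Rop A b C L
      (integrableOn_expA_mul_mul_expA A _ hε hdecay hx.le)]
  have hresolvent : G + G * R = 1 := by
    rw [← mul_one_add]; exact Ring.inverse_mul_cancel _ (hinv x hx)
  have hsplit : expA A x * expA A y = expA A x * G * expA A y + expA A x * G * R * expA A y := by
    rw [mul_assoc _ G R, ← add_mul, ← mul_add, hresolvent, mul_one]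
  rw [hintegral, hT, hΦ, expA_add, hsplit]
  simp only [L, add_apply, mul_apply_eq_comp, ContinuousLinearMap.comp_apply, map_add]
  ring

/-- With the rank-one operator `BC : v ↦ C(v)·b` and `R_x` as above, if `I + R_x` is
invertible for all `x > 0`, then `Φ(t) = C(exp(−tA)·b)` and
`T(x,y) = −C(exp(−xA)·(I + R_x)⁻¹·exp(−yA)·b)` satisfy the Gelfand–Levitan equation:
for all `0 < x < y`, `Φ(x+y) + T(x,y) + ∫_x^∞ T(x,z)·Φ(z+y) dz = 0`. -/
theorem gelfand_levitan
    {H : Type*} [NormedAddCommGroup H] [InnerProductSpace ℂ H] [CompleteSpace H]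
    (A : H →L[ℂ] H) (b : H) (C : H →L[ℂ] ℂ)
    (M ε : ℝ) (hM : 0 < M) (hε : 0 < ε)
    (hdecay : ∀ t : ℝ, 0 ≤ t → ‖expA A t‖ ≤ M * Real.exp (-ε * t))
    (hinv : ∀ x : ℝ, 0 < x → IsUnit (1 + Rop A (C.smulRight b) x))
    (Φ : ℝ → ℂ) (hΦ : ∀ t : ℝ, Φ t = C (expA A t b))
    (T : ℝ → ℝ → ℂ)
    (hT : ∀ x y : ℝ, T x y =
      -(C ((expA A x * Ring.inverse (1 + Rop A (C.smulRight b) x) * expA A y) b))) :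
    ∀ x y : ℝ, 0 < x → x < y →
      Φ (x + y) + T x y + ∫ z in Set.Ioi x, T x z * Φ (z + y) = 0 :=
  gelfand_levitan_general A b C M ε hε hdecay hinv Φ hΦ T hT
end
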